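/- Converse rate bound for the sum rate: let n be a positive integer, 𝒳, 𝒴 finite alphabets, q_{X,Y} a distribution on 𝒳×𝒴, ℳ and 𝒥 finite sets, and ε ∈ (0,1/4). Let (X^n, Y^n, J, M) be jointly distributed random variables with values in 𝒳^n × 𝒴^n × 𝒥 × ℳ whose joint law P satisfies ‖P_{X^n,Y^n} − q_{X,Y}^{⊗n}‖_TV ≤ ε, and let T be uniform on {1,…,n}, independent of (X^n, Y^n, J, M). Then (1/n)·( log|ℳ| + log|𝒥| ) ≥ I(M, J, T ; X_T, Y_T) − 2g(ε), where g(ε) := 4ε·( log|𝒳| + log|𝒴| + log(1/ε) ) and the mutual information is computed under the joint law of (M, J, T, X_T, Y_T). -/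

import Mathlib

set_option linter.unusedSectionVars false

open scoped BigOperators
open Filter

namespace RCS

/-- `p` is a probability mass function on the finite type `S`. -/
def IsPMF {S : Type*} [Fintype S] (p : S → ℝ) : Prop :=
  (∀ s, 0 ≤ p s) ∧ ∑ s, p s = 1

/-- `k` is a conditional probability kernel from `A` to `B`. -/
def IsKernel {A B : Type*} [Fintype B] (k : A → B → ℝ) : Prop :=
  ∀ a, IsPMF (k a)

/-- Total variation distance between two pmfs on a finite type. -/
noncomputable def TV {S : Type*} [Fintype S] (p q : S → ℝ) : ℝ :=
  (1 / 2) * ∑ s, |p s - q s|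

/-- Shannon mutual information (in nats) of a joint pmf given in curried form,
with the convention `0·log(0/x) = 0` (automatic since `Real.log 0 = 0`). -/
noncomputable def MI {U V : Type*} [Fintype U] [Fintype V] (p : U → V → ℝ) : ℝ :=
  ∑ u, ∑ v, p u v * Real.log (p u v / ((∑ v', p u v') * (∑ u', p u' v)))

/-- `g(ε) := 4ε·(log|𝒳| + log|𝒴| + log(1/ε))`. -/
noncomputable def g (X Y : Type*) [Fintype X] [Fintype Y] (ε : ℝ) : ℝ :=
  4 * ε * (Real.log (Fintype.card X) + Real.log (Fintype.card Y) + Real.log (1 / ε))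


noncomputable def ent {S : Type*} [Fintype S] (p : S → ℝ) : ℝ := ∑ s, Real.negMulLog (p s)

section Basic
variable {S : Type*} [Fintype S]

lemma gibbs_key (p q : ℝ) (hp : 0 ≤ p) (hq : 0 ≤ q) (hd : q = 0 → p = 0) :
    p * Real.log (q) - p * Real.log (p) ≤ q - p := by
  rcases eq_or_lt_of_le hp with h | h
  · simp [← h, hq]
  · have hq0 : 0 < q := by
      rcases eq_or_lt_of_le hq with h2 | h2
      · exact absurd (hd h2.symm) (by positivity)
      · exact h2
    have hlog : Real.log (q / p) ≤ q / p - 1 := Real.log_le_sub_one_of_pos (by positivity)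
    rw [Real.log_div (ne_of_gt hq0) (ne_of_gt h)] at hlog
    calc p * Real.log q - p * Real.log p = p * (Real.log q - Real.log p) := by ring
      _ ≤ p * (q / p - 1) := mul_le_mul_of_nonneg_left hlog hp
      _ = q - p := by field_simp

lemma ent_le_cross (p q : S → ℝ) (hp0 : ∀ s, 0 ≤ p s) (hq0 : ∀ s, 0 ≤ q s)
    (hd : ∀ s, q s = 0 → p s = 0) (hsum : ∑ s, q s ≤ ∑ s, p s) :
    ent p ≤ ∑ s, -(p s * Real.log (q s)) := by
  have key : ∀ s ∈ Finset.univ, p s * Real.log (q s) - p s * Real.log (p s) ≤ q s - p s :=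
    fun s _ => gibbs_key (p s) (q s) (hp0 s) (hq0 s) (hd s)
  have hsum2 := Finset.sum_le_sum key
  rw [Finset.sum_sub_distrib, Finset.sum_sub_distrib] at hsum2
  have h2 : ∑ s, p s * Real.log (q s) ≤ ∑ s, p s * Real.log (p s) := by linarith
  have e1 : ent p = ∑ s, -(p s * Real.log (p s)) := by
    simp only [ent, Real.negMulLog, neg_mul]
  rw [e1, Finset.sum_neg_distrib, Finset.sum_neg_distrib]
  linarith

lemma ent_le_log_card (p : S → ℝ) (hp0 : ∀ s, 0 ≤ p s) (hp1 : ∑ s, p s = 1) :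
    ent p ≤ Real.log (Fintype.card S) := by
  have hne : Nonempty S := by
    by_contra h
    rw [not_nonempty_iff] at h
    simp [Finset.univ_eq_empty] at hp1
  have hcard : (0 : ℝ) < (Fintype.card S : ℝ) := by exact_mod_cast Fintype.card_pos
  have hq1 : ∑ _s : S, ((Fintype.card S : ℝ))⁻¹ = 1 := by
    rw [Finset.sum_const, Finset.card_univ, nsmul_eq_mul, mul_inv_cancel₀ (ne_of_gt hcard)]
  have h := ent_le_cross p (fun _ => (Fintype.card S : ℝ)⁻¹) hp0
    (fun _ => by positivity) (fun s hs => absurd hs (by positivity))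
    (by rw [hq1, hp1])
  refine h.trans (le_of_eq ?_)
  have e : ∀ s : S, -(p s * Real.log ((Fintype.card S : ℝ)⁻¹)) = p s * Real.log (Fintype.card S) := by
    intro s; rw [Real.log_inv]; ring
  simp only [e]
  rw [← Finset.sum_mul, hp1, one_mul]

end Basic
noncomputable def condEnt {A B : Type*} [Fintype A] [Fintype B] (F : A → B → ℝ) : ℝ :=
  ∑ a, ∑ b, -(F a b * Real.log (F a b / ∑ b', F a b'))

section Joint
variable {A B : Type*} [Fintype A] [Fintype B]

/-- entropy of a marginal is at most the "entropy" of the joint. -/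
lemma ent_marginal_le (F : A → B → ℝ) (hF : ∀ a b, 0 ≤ F a b) :
    ent (fun b => ∑ a, F a b) ≤ ∑ a, ∑ b, Real.negMulLog (F a b) := by
  rw [Finset.sum_comm]
  unfold ent
  refine Finset.sum_le_sum (fun b _ => ?_)
  simp only []
  set G := ∑ a, F a b with hG
  have hG0 : 0 ≤ G := Finset.sum_nonneg (fun a _ => hF a b)
  have key : ∀ a, -(F a b * Real.log G) ≤ Real.negMulLog (F a b) := by
    intro a
    rcases eq_or_lt_of_le (hF a b) with h | h
    · simp [← h, Real.negMulLog]
    · have hle : F a b ≤ G := Finset.single_le_sum (fun a _ => hF a b) (Finset.mem_univ a)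
      have : Real.log (F a b) ≤ Real.log G := Real.log_le_log h hle
      rw [Real.negMulLog, neg_mul]
      nlinarith
  have e0 : G * Real.log G = ∑ a, F a b * Real.log G := by rw [hG, Finset.sum_mul]
  calc Real.negMulLog G = ∑ a, -(F a b * Real.log G) := by
        rw [Real.negMulLog, neg_mul, e0, ← Finset.sum_neg_distrib]
    _ ≤ ∑ a, Real.negMulLog (F a b) := Finset.sum_le_sum (fun a _ => key a)

/-- chain rule for entropy. -/
lemma chain_rule (F : A → B → ℝ) (hF : ∀ a b, 0 ≤ F a b) :
    ∑ a, ∑ b, Real.negMulLog (F a b) = ent (fun a => ∑ b, F a b) + condEnt F := by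
  unfold ent condEnt
  rw [← Finset.sum_add_distrib]
  refine Finset.sum_congr rfl (fun a _ => ?_)
  simp only []
  set c := ∑ b, F a b with hc
  have hc0 : 0 ≤ c := Finset.sum_nonneg (fun b _ => hF a b)
  have key : ∀ b, Real.negMulLog (F a b)
      = -(F a b * Real.log c) + -(F a b * Real.log (F a b / c)) := by
    intro b
    rcases eq_or_lt_of_le (hF a b) with h | h
    · simp [← h, Real.negMulLog]
    · have hcpos : 0 < c := lt_of_lt_of_le h
        (Finset.single_le_sum (fun b _ => hF a b) (Finset.mem_univ b))
      rw [Real.negMulLog, Real.log_div (ne_of_gt h) (ne_of_gt hcpos)]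
      ring
  rw [Finset.sum_congr rfl (fun b _ => key b), Finset.sum_add_distrib]
  congr 1
  calc ∑ b, -(F a b * Real.log c) = -(c * Real.log c) := by
        rw [hc, Finset.sum_mul, ← Finset.sum_neg_distrib]
    _ = Real.negMulLog c := by rw [Real.negMulLog, neg_mul]

end Joint

section Marg
variable {Z : Type*} [Fintype Z] [DecidableEq Z] {n : ℕ}

noncomputable def marg (r : (Fin n → Z) → ℝ) (t : Fin n) (z : Z) : ℝ :=
  ∑ f, if f t = z then r f else 0

lemma marg_nonneg (r : (Fin n → Z) → ℝ) (hr : ∀ f, 0 ≤ r f) (t : Fin n) (z : Z) :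
    0 ≤ marg r t z :=
  Finset.sum_nonneg (fun f _ => by by_cases h : f t = z <;> simp [h, hr f])

lemma sum_marg_mul (r : (Fin n → Z) → ℝ) (t : Fin n) (φ : Z → ℝ) :
    ∑ z, marg r t z * φ z = ∑ f, r f * φ (f t) := by
  unfold marg
  simp only [Finset.sum_mul, ite_mul, zero_mul]
  rw [Finset.sum_comm]
  refine Finset.sum_congr rfl (fun f _ => ?_)
  simp [Finset.sum_ite_eq]

lemma marg_sum (r : (Fin n → Z) → ℝ) (t : Fin n) : ∑ z, marg r t z = ∑ f, r f := by
  have := sum_marg_mul r t (fun _ => 1)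
  simpa using this

lemma single_le_marg (r : (Fin n → Z) → ℝ) (hr : ∀ f, 0 ≤ r f) (t : Fin n) (f : Fin n → Z) :
    r f ≤ marg r t (f t) := by
  unfold marg
  have h0 : r f = if f t = f t then r f else 0 := by simp
  rw [h0]
  exact Finset.single_le_sum (f := fun f' => if f' t = f t then r f' else 0)
    (fun f' _ => by by_cases h : f' t = f t <;> simp [h, hr f']) (Finset.mem_univ f)

/-- subadditivity of entropy over coordinates. -/
lemma ent_le_sum_ent_marg (r : (Fin n → Z) → ℝ) (hr0 : ∀ f, 0 ≤ r f) (hr1 : ∑ f, r f = 1) :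
    ent r ≤ ∑ t, ent (marg r t) := by
  set q : (Fin n → Z) → ℝ := fun f => ∏ t, marg r t (f t) with hq
  have hq0 : ∀ f, 0 ≤ q f := fun f => Finset.prod_nonneg (fun t _ => marg_nonneg r hr0 t _)
  have hqsum : ∑ f, q f = 1 := by
    rw [hq]
    rw [← Fintype.piFinset_univ, ← Finset.prod_univ_sum]
    simp [marg_sum r _, hr1]
  have hd : ∀ f, q f = 0 → r f = 0 := by
    intro f h
    rw [hq] at h
    obtain ⟨t, _, ht⟩ := Finset.prod_eq_zero_iff.mp h
    have h1 := single_le_marg r hr0 t f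
    have h2 := hr0 f
    rw [ht] at h1
    linarith
  have h1 : ent r ≤ ∑ f, -(r f * Real.log (q f)) :=
    ent_le_cross r q hr0 hq0 hd (by rw [hqsum, hr1])
  have h2 : ∀ f, -(r f * Real.log (q f)) = ∑ t, -(r f * Real.log (marg r t (f t))) := by
    intro f
    rcases eq_or_lt_of_le (hr0 f) with h | h
    · simp [← h]
    · have hne : ∀ t ∈ Finset.univ, marg r t (f t) ≠ 0 := by
        intro t _
        have h3 := single_le_marg r hr0 t f
        intro h0; rw [h0] at h3; linarith
      rw [hq]
      simp only []
      rw [Real.log_prod hne, Finset.mul_sum, ← Finset.sum_neg_distrib]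
  calc ent r ≤ ∑ f, -(r f * Real.log (q f)) := h1
    _ = ∑ f, ∑ t, -(r f * Real.log (marg r t (f t))) := Finset.sum_congr rfl (fun f _ => h2 f)
    _ = ∑ t, ∑ f, -(r f * Real.log (marg r t (f t))) := by rw [Finset.sum_comm]
    _ = ∑ t, ent (marg r t) := by
        refine Finset.sum_congr rfl (fun t _ => ?_)
        have e1 := sum_marg_mul r t (fun z => -(Real.log (marg r t z)))
        unfold ent
        calc ∑ f, -(r f * Real.log (marg r t (f t)))
            = ∑ f, r f * -(Real.log (marg r t (f t))) := by
              refine Finset.sum_congr rfl (fun f _ => ?_); ring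
          _ = ∑ z, marg r t z * -(Real.log (marg r t z)) := e1.symm
          _ = ∑ z, Real.negMulLog (marg r t z) := by
              refine Finset.sum_congr rfl (fun z _ => ?_); rw [Real.negMulLog]; ring

end Marg
section Prod
variable {Z : Type*} [Fintype Z] [DecidableEq Z] {n : ℕ}

lemma sum_prod_weight (k : Z → ℝ) (hk : ∑ z, k z = 1) (t : Fin n) (φ : Z → ℝ) :
    ∑ f : Fin n → Z, (∏ s, k (f s)) * φ (f t) = ∑ z, k z * φ z := by
  set Mm : Fin n → Z → ℝ := fun s z => if s = t then k z * φ z else k z with hM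
  have e1 : ∀ f : Fin n → Z, ∏ s, Mm s (f s) = (∏ s, k (f s)) * φ (f t) := by
    intro f
    rw [← Finset.mul_prod_erase Finset.univ _ (Finset.mem_univ t),
        ← Finset.mul_prod_erase Finset.univ (fun s => k (f s)) (Finset.mem_univ t)]
    have e2 : ∀ s ∈ Finset.univ.erase t, Mm s (f s) = k (f s) := by
      intro s hs
      rw [hM]; simp [Finset.ne_of_mem_erase hs]
    rw [Finset.prod_congr rfl e2]
    rw [hM]; simp; ring
  have e3 : ∀ s, ∑ z, Mm s z = if s = t then ∑ z, k z * φ z else 1 := by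
    intro s
    rw [hM]
    by_cases h : s = t <;> simp [h, hk]
  calc ∑ f : Fin n → Z, (∏ s, k (f s)) * φ (f t)
      = ∑ f : Fin n → Z, ∏ s, Mm s (f s) := by
        refine Finset.sum_congr rfl (fun f _ => (e1 f).symm)
    _ = ∏ s, ∑ z, Mm s z := by
        rw [← Fintype.piFinset_univ, ← Finset.prod_univ_sum]
    _ = ∑ z, k z * φ z := by
        rw [Finset.prod_congr rfl (fun s _ => e3 s), Finset.prod_ite_eq' Finset.univ t
          (fun _ => ∑ z, k z * φ z)]
        simp

lemma marg_prod (k : Z → ℝ) (hk : ∑ z, k z = 1) (t : Fin n) :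
    marg (fun f : Fin n → Z => ∏ s, k (f s)) t = k := by
  funext z
  unfold marg
  have e1 : ∀ f : Fin n → Z, (if f t = z then (∏ s, k (f s)) else 0)
      = (∏ s, k (f s)) * (if f t = z then 1 else 0) := by
    intro f; by_cases h : f t = z <;> simp [h]
  rw [Finset.sum_congr rfl (fun f _ => e1 f),
    sum_prod_weight k hk t (fun z' => if z' = z then 1 else 0)]
  simp [Finset.sum_ite_eq', mul_ite]

lemma ent_prod (k : Z → ℝ) (hk0 : ∀ z, 0 ≤ k z) (hk : ∑ z, k z = 1) :
    ent (fun f : Fin n → Z => ∏ s, k (f s)) = n * ent k := by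
  unfold ent
  have e1 : ∀ f : Fin n → Z, Real.negMulLog (∏ s, k (f s))
      = ∑ t, (∏ s, k (f s)) * (-(Real.log (k (f t)))) := by
    intro f
    by_cases h : ∏ s, k (f s) = 0
    · simp [h, Real.negMulLog]
    · have hne : ∀ s ∈ Finset.univ, k (f s) ≠ 0 := fun s _ =>
        Finset.prod_ne_zero_iff.mp h s (Finset.mem_univ s)
      rw [Real.negMulLog, Real.log_prod hne, neg_mul, Finset.mul_sum,
        ← Finset.sum_neg_distrib]
      refine Finset.sum_congr rfl (fun t _ => ?_); ring
  rw [Finset.sum_congr rfl (fun f _ => e1 f), Finset.sum_comm]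
  have e2 : ∀ t : Fin n, ∑ f : Fin n → Z, (∏ s, k (f s)) * (-(Real.log (k (f t))))
      = ent k := by
    intro t
    rw [sum_prod_weight k hk t (fun z => -(Real.log (k z)))]
    unfold ent
    refine Finset.sum_congr rfl (fun z _ => ?_); rw [Real.negMulLog]; ring
  rw [Finset.sum_congr rfl (fun t _ => e2 t)]
  rw [Finset.sum_const, Finset.card_univ, Fintype.card_fin, nsmul_eq_mul]; rfl

end Prod
section Fannes
variable {S : Type*} [Fintype S]

lemma eta_sub_le (x y : ℝ) (hx : 0 ≤ x) (hy : 0 ≤ y) (hx1 : x ≤ 1) (hy1 : y ≤ 1) :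
    Real.negMulLog x - Real.negMulLog y ≤ Real.negMulLog |x - y| + |x - y| := by
  rcases le_total y x with h | h
  · -- x ≥ y : subadditivity
    set d := x - y with hd
    have hd0 : 0 ≤ d := by linarith
    have habs : |x - y| = d := abs_of_nonneg hd0
    rw [habs]
    have key : Real.negMulLog x ≤ Real.negMulLog y + Real.negMulLog d := by
      have hx' : x = y + d := by ring
      simp only [Real.negMulLog, neg_mul]
      have h1 : y * Real.log y ≤ y * Real.log x := by
        rcases eq_or_lt_of_le hy with h2 | h2
        · simp [← h2]
        · exact mul_le_mul_of_nonneg_left (Real.log_le_log h2 (by linarith)) hy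
      have h2 : d * Real.log d ≤ d * Real.log x := by
        rcases eq_or_lt_of_le hd0 with h3 | h3
        · simp [← h3]
        · exact mul_le_mul_of_nonneg_left (Real.log_le_log h3 (by linarith)) hd0
      have h3 : x * Real.log x = y * Real.log x + d * Real.log x := by
        rw [hx']; ring
      linarith
    linarith
  · -- x < y : difference bounded by d
    set d := y - x with hd
    have hd0 : 0 ≤ d := by linarith
    have habs : |x - y| = d := by rw [abs_sub_comm]; exact abs_of_nonneg hd0
    rw [habs]
    have hnn : 0 ≤ Real.negMulLog d := Real.negMulLog_nonneg hd0 (by linarith)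
    have key : Real.negMulLog x - Real.negMulLog y ≤ d := by
      simp only [Real.negMulLog, neg_mul]
      have hy' : y = x + d := by ring
      have h1 : d * Real.log y ≤ 0 :=
        mul_nonpos_of_nonneg_of_nonpos hd0 (Real.log_nonpos hy hy1)
      have h2 : x * Real.log y - x * Real.log x ≤ d := by
        rcases eq_or_lt_of_le hx with h3 | h3
        · simp [← h3]; linarith
        · have hy0 : 0 < y := by linarith
          have := gibbs_key x y hx hy (fun h0 => by linarith)
          linarith [this]
      have h3 : y * Real.log y = x * Real.log y + d * Real.log y := by rw [hy']; ring
      linarith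
    linarith

lemma eta_sum_le (d : S → ℝ) (hd : ∀ s, 0 ≤ d s) :
    ∑ s, Real.negMulLog (d s)
      ≤ Real.negMulLog (∑ s, d s) + (∑ s, d s) * Real.log (Fintype.card S) := by
  set D := ∑ s, d s with hD
  have hD0 : 0 ≤ D := Finset.sum_nonneg (fun s _ => hd s)
  rcases eq_or_lt_of_le hD0 with h | h
  · have hz : ∀ s ∈ Finset.univ, d s = 0 := by
      intro s _
      have := Finset.single_le_sum (fun s _ => hd s) (Finset.mem_univ s)
      have := hd s
      linarith [hD ▸ h.symm]
    rw [Finset.sum_congr rfl (fun s hs => by rw [hz s hs] : ∀ s ∈ Finset.univ, Real.negMulLog (d s) = Real.negMulLog 0)]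
    simp [Real.negMulLog, ← h]
  · have hcardpos : 0 < Fintype.card S := by
      rcases Finset.exists_ne_zero_of_sum_ne_zero (show (∑ s, d s) ≠ 0 by rw [← hD]; exact h.ne') with ⟨s, _, _⟩
      exact Fintype.card_pos_iff.mpr ⟨s⟩
    have hcardR : (0:ℝ) < (Fintype.card S : ℝ) := by exact_mod_cast hcardpos
    set u := D / (Fintype.card S : ℝ) with hu
    have hu0 : 0 < u := by positivity
    have key : ∀ s, Real.negMulLog (d s) = d s * Real.log (u / d s) - d s * Real.log u := by
      intro s
      rcases eq_or_lt_of_le (hd s) with h2 | h2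
      · simp [← h2, Real.negMulLog]
      · rw [Real.negMulLog, Real.log_div (ne_of_gt hu0) (ne_of_gt h2)]
        ring
    have key2 : ∀ s, d s * Real.log (u / d s) ≤ u - d s := by
      intro s
      rcases eq_or_lt_of_le (hd s) with h2 | h2
      · simp [← h2]; positivity
      · have := Real.log_le_sub_one_of_pos (show 0 < u / d s by positivity)
        calc d s * Real.log (u / d s) ≤ d s * (u / d s - 1) :=
              mul_le_mul_of_nonneg_left this (hd s)
          _ = u - d s := by field_simp
    have h1 : ∑ s, d s * Real.log (u / d s) ≤ 0 := by
      calc ∑ s, d s * Real.log (u / d s) ≤ ∑ s, (u - d s) := Finset.sum_le_sum (fun s _ => key2 s)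
        _ = (Fintype.card S : ℝ) * u - D := by
            rw [Finset.sum_sub_distrib, Finset.sum_const, Finset.card_univ, nsmul_eq_mul, hD]
        _ = 0 := by rw [hu]; field_simp; ring
    have h2 : ∑ s, Real.negMulLog (d s)
        = ∑ s, d s * Real.log (u / d s) - D * Real.log u := by
      rw [Finset.sum_congr rfl (fun s _ => key s), Finset.sum_sub_distrib, ← Finset.sum_mul, ← hD]
    have h3 : -(D * Real.log u) = Real.negMulLog D + D * Real.log (Fintype.card S) := by
      rw [hu, Real.log_div (ne_of_gt h) (ne_of_gt hcardR), Real.negMulLog]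
      ring
    linarith
  
lemma eta_le_inv_e (x : ℝ) (hx : 0 ≤ x) : Real.negMulLog x ≤ (Real.exp 1)⁻¹ := by
  have hepos : 0 < Real.exp 1 := Real.exp_pos 1
  rcases eq_or_lt_of_le hx with h | h
  · simp [← h, Real.negMulLog]; positivity
  · have h1 : Real.log ((x * Real.exp 1)⁻¹) ≤ (x * Real.exp 1)⁻¹ - 1 :=
      Real.log_le_sub_one_of_pos (by positivity)
    rw [Real.log_inv, Real.log_mul (ne_of_gt h) (ne_of_gt hepos), Real.log_exp] at h1
    have h2 : -Real.log x ≤ (x * Real.exp 1)⁻¹ := by linarith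
    have h3 : x * (-Real.log x) ≤ x * (x * Real.exp 1)⁻¹ :=
      mul_le_mul_of_nonneg_left h2 hx
    rw [Real.negMulLog, neg_mul]
    calc -(x * Real.log x) = x * (-Real.log x) := by ring
      _ ≤ x * (x * Real.exp 1)⁻¹ := h3
      _ = (Real.exp 1)⁻¹ := by field_simp
  
lemma eta_mono (D E : ℝ) (h0 : 0 ≤ D) (hDE : D ≤ E) (hE : E ≤ (Real.exp 1)⁻¹) :
    Real.negMulLog D ≤ Real.negMulLog E := by
  have hepos : 0 < Real.exp 1 := Real.exp_pos 1
  have hE1 : E ≤ 1 := hE.trans (by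
    rw [inv_le_one_iff₀]
    right
    linarith [Real.add_one_le_exp 1])
  rcases eq_or_lt_of_le h0 with h | h
  · rw [← h, Real.negMulLog_zero]
    exact Real.negMulLog_nonneg (h0.trans hDE) hE1
  · have hEpos : 0 < E := lt_of_lt_of_le h hDE
    set t := D / E with ht
    have ht0 : 0 < t := by positivity
    have ht1 : t ≤ 1 := by rw [ht]; exact div_le_one_of_le₀ hDE hEpos.le
    have hDt : D = t * E := by rw [ht]; field_simp
    have hlogE : Real.log E ≤ -1 := by
      calc Real.log E ≤ Real.log ((Real.exp 1)⁻¹) := Real.log_le_log hEpos hE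
        _ = -1 := by rw [Real.log_inv, Real.log_exp]
    have hlogt : t * Real.log t ≥ t - 1 := by
      have h1 : Real.log (t⁻¹) ≤ t⁻¹ - 1 := Real.log_le_sub_one_of_pos (by positivity)
      rw [Real.log_inv] at h1
      have h2 : t * (-Real.log t) ≤ t * (t⁻¹ - 1) := mul_le_mul_of_nonneg_left h1 ht0.le
      have h3 : t * (t⁻¹ - 1) = 1 - t := by field_simp
      nlinarith
    have hlogD : Real.log D = Real.log t + Real.log E := by
      rw [hDt, Real.log_mul (ne_of_gt ht0) (ne_of_gt hEpos)]
    simp only [Real.negMulLog, neg_mul]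
    rw [hDt, Real.log_mul (ne_of_gt ht0) (ne_of_gt hEpos)]
    nlinarith [mul_nonneg (mul_nonneg hEpos.le (sub_nonneg.mpr ht1)) (by linarith : (0:ℝ) ≤ -Real.log E - 1),
      mul_nonneg hEpos.le (by linarith : (0:ℝ) ≤ t * Real.log t - t + 1)]

lemma eta_le_eps (D ε : ℝ) (hD0 : 0 ≤ D) (hD : D ≤ 2*ε) (hε : 0 < ε) (hε4 : ε < 1/4) :
    Real.negMulLog D ≤ 2 * ε * Real.log (1/ε) := by
  have hlog4 : (1:ℝ) < Real.log (1/ε) := by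
    rw [Real.lt_log_iff_exp_lt (by positivity)]
    calc Real.exp 1 < 2.7182818286 := Real.exp_one_lt_d9
      _ ≤ 4 := by norm_num
      _ < 1/ε := by rw [lt_div_iff₀ hε]; linarith
  have hloge : Real.log (1/ε) = -Real.log ε := by rw [one_div, Real.log_inv]
  by_cases h : 2*ε ≤ (Real.exp 1)⁻¹
  · have h1 : Real.negMulLog D ≤ Real.negMulLog (2*ε) := eta_mono D (2*ε) hD0 hD h
    have h2 : Real.negMulLog (2*ε) = -(2*ε*(Real.log 2 + Real.log ε)) := by
      rw [Real.negMulLog, Real.log_mul two_ne_zero (ne_of_gt hε)]; ring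
    have hlog2 : (0:ℝ) ≤ Real.log 2 := Real.log_nonneg (by norm_num)
    rw [hloge]
    nlinarith
  · push_neg at h
    have h1 := eta_le_inv_e D hD0
    have h2 : 2*ε*1 < 2*ε*Real.log (1/ε) :=
      mul_lt_mul_of_pos_left hlog4 (by positivity)
    linarith

end Fannes

section Final
variable {S : Type*} [Fintype S]

lemma fannes (p q : S → ℝ) (hp0 : ∀ s, 0 ≤ p s) (hp1 : ∑ s, p s = 1)
    (hq0 : ∀ s, 0 ≤ q s) (hq1 : ∑ s, q s = 1)
    (ε : ℝ) (hε : 0 < ε) (hε4 : ε < 1/4)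
    (hTV : ∑ s, |p s - q s| ≤ 2*ε) :
    ent p ≤ ent q + 2*ε*Real.log (Fintype.card S) + 2*ε*Real.log (1/ε) + 2*ε := by
  set d : S → ℝ := fun s => |p s - q s| with hd
  have hd0 : ∀ s, 0 ≤ d s := fun s => abs_nonneg _
  set D := ∑ s, d s with hD
  have hD0 : 0 ≤ D := Finset.sum_nonneg fun s _ => hd0 s
  have hple : ∀ s, p s ≤ 1 := fun s => by
    calc p s ≤ ∑ s', p s' := Finset.single_le_sum (fun s _ => hp0 s) (Finset.mem_univ s)
      _ = 1 := hp1
  have hqle : ∀ s, q s ≤ 1 := fun s => by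
    calc q s ≤ ∑ s', q s' := Finset.single_le_sum (fun s _ => hq0 s) (Finset.mem_univ s)
      _ = 1 := hq1
  have h1 : ent p - ent q ≤ ∑ s, (Real.negMulLog (d s) + d s) := by
    unfold ent
    rw [← Finset.sum_sub_distrib]
    exact Finset.sum_le_sum fun s _ => eta_sub_le (p s) (q s) (hp0 s) (hq0 s) (hple s) (hqle s)
  rw [Finset.sum_add_distrib] at h1
  have h3 := eta_sum_le d hd0
  have h4 : Real.negMulLog D ≤ 2 * ε * Real.log (1/ε) :=
    eta_le_eps D ε hD0 (hD ▸ hTV) hε hε4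
  have hne : Nonempty S := by
    by_contra h
    rw [not_nonempty_iff] at h
    simp [Finset.univ_eq_empty] at hp1
  have hlogcard : 0 ≤ Real.log (Fintype.card S) := by
    apply Real.log_nonneg
    exact_mod_cast Fintype.card_pos
  have h5 : D * Real.log (Fintype.card S) ≤ 2*ε * Real.log (Fintype.card S) :=
    mul_le_mul_of_nonneg_right (hD ▸ hTV) hlogcard
  have hDe : D ≤ 2*ε := hD ▸ hTV
  linarith

lemma marg_tv_le {Z : Type*} [Fintype Z] [DecidableEq Z] {n : ℕ}
    (r r' : (Fin n → Z) → ℝ) (t : Fin n) :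
    ∑ z, |marg r t z - marg r' t z| ≤ ∑ f, |r f - r' f| := by
  have key : ∀ z, |marg r t z - marg r' t z|
      ≤ ∑ f, (if f t = z then |r f - r' f| else 0) := by
    intro z
    unfold marg
    rw [← Finset.sum_sub_distrib]
    refine (Finset.abs_sum_le_sum_abs _ _).trans (le_of_eq ?_)
    refine Finset.sum_congr rfl fun f _ => ?_
    by_cases h : f t = z <;> simp [h]
  calc ∑ z, |marg r t z - marg r' t z|
      ≤ ∑ z, ∑ f, (if f t = z then |r f - r' f| else 0) :=
        Finset.sum_le_sum fun z _ => key z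
    _ = ∑ f, ∑ z, (if f t = z then |r f - r' f| else 0) := by rw [Finset.sum_comm]
    _ = ∑ f, |r f - r' f| := by
        refine Finset.sum_congr rfl fun f _ => ?_
        simp [Finset.sum_ite_eq]

lemma MI_eq {U V : Type*} [Fintype U] [Fintype V] (p : U → V → ℝ)
    (hp : ∀ u v, 0 ≤ p u v) :
    MI p = ent (fun v => ∑ u, p u v) - condEnt p := by
  unfold MI condEnt ent
  have key : ∀ (u : U) (v : V), p u v * Real.log (p u v / ((∑ v', p u v') * (∑ u', p u' v)))
      = -(p u v * Real.log (∑ u', p u' v)) - -(p u v * Real.log (p u v / ∑ v', p u v')) := by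
    intro u v
    rcases eq_or_lt_of_le (hp u v) with h | h
    · simp [← h]
    · have hU : 0 < ∑ v', p u v' :=
        lt_of_lt_of_le h (Finset.single_le_sum (fun v' _ => hp u v') (Finset.mem_univ v))
      have hV : 0 < ∑ u', p u' v :=
        lt_of_lt_of_le h (Finset.single_le_sum (fun u' _ => hp u' v) (Finset.mem_univ u))
      rw [Real.log_div (ne_of_gt h) (by positivity),
        Real.log_mul (ne_of_gt hU) (ne_of_gt hV),
        Real.log_div (ne_of_gt h) (ne_of_gt hU)]
      ring
  rw [Finset.sum_congr rfl (fun u _ => Finset.sum_congr rfl (fun v _ => key u v))]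
  rw [Finset.sum_congr rfl (fun u _ => Finset.sum_sub_distrib (s := Finset.univ) _ _),
    Finset.sum_sub_distrib]
  congr 1
  rw [Finset.sum_comm]
  refine Finset.sum_congr rfl fun v _ => ?_
  have hb : (fun v => ∑ u, p u v) v = ∑ u, p u v := rfl
  rw [Real.negMulLog, hb, neg_mul, Finset.sum_mul, ← Finset.sum_neg_distrib]

end Final
section CondSub
variable {Z : Type*} [Fintype Z] [DecidableEq Z] {n : ℕ}

lemma condrow_subadd (r : (Fin n → Z) → ℝ) (hr : ∀ f, 0 ≤ r f) :
    ∑ f, -(r f * Real.log (r f / ∑ f', r f'))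
      ≤ ∑ t, ∑ z, -(marg r t z * Real.log (marg r t z / ∑ f', r f')) := by
  set c := ∑ f', r f' with hc
  have hc0 : 0 ≤ c := Finset.sum_nonneg fun f _ => hr f
  rcases eq_or_lt_of_le hc0 with h | h
  · have hz : ∀ f, r f = 0 := by
      intro f
      have h1 := Finset.single_le_sum (fun f _ => hr f) (Finset.mem_univ f)
      rw [← hc] at h1
      have h2 := hr f
      linarith
    have hmz : ∀ (t : Fin n) (z : Z), marg r t z = 0 := by
      intro t z
      unfold marg
      exact Finset.sum_eq_zero fun f _ => by rw [hz f]; simp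
    have e1 : ∀ f ∈ Finset.univ, -(r f * Real.log (r f / c)) = 0 := fun f _ => by
      rw [hz f]; simp
    have e2 : ∀ t ∈ Finset.univ, ∑ z, -(marg r t z * Real.log (marg r t z / c)) = 0 :=
      fun t _ => Finset.sum_eq_zero fun z _ => by rw [hmz t z]; simp
    rw [Finset.sum_congr rfl e1, Finset.sum_congr rfl e2]
    simp
  · have hcne : c ≠ 0 := ne_of_gt h
    set r' : (Fin n → Z) → ℝ := fun f => r f / c with hr'
    have hr'0 : ∀ f, 0 ≤ r' f := fun f => by
      show 0 ≤ r f / c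
      exact div_nonneg (hr f) hc0
    have hr'1 : ∑ f, r' f = 1 := by
      show ∑ f, r f / c = 1
      rw [← Finset.sum_div, ← hc, div_self hcne]
    have hmarg : ∀ (t : Fin n) (z : Z), marg r t z = c * marg r' t z := by
      intro t z
      unfold marg
      rw [Finset.mul_sum]
      refine Finset.sum_congr rfl fun f _ => ?_
      show (if f t = z then r f else 0) = c * (if f t = z then r f / c else 0)
      by_cases hft : f t = z
      · simp only [hft, if_true]; field_simp
      · simp [hft]
    have hLHS : ∑ f, -(r f * Real.log (r f / c)) = c * ent r' := by
      unfold ent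
      rw [Finset.mul_sum]
      refine Finset.sum_congr rfl fun f _ => ?_
      show -(r f * Real.log (r f / c)) = c * Real.negMulLog (r f / c)
      have e : c * (r f / c) = r f := by field_simp
      rw [Real.negMulLog]
      calc -(r f * Real.log (r f / c)) = -((c * (r f / c)) * Real.log (r f / c)) := by rw [e]
        _ = c * (-(r f / c) * Real.log (r f / c)) := by ring
    have hRHS : ∀ t, ∑ z, -(marg r t z * Real.log (marg r t z / c)) = c * ent (marg r' t) := by
      intro t
      unfold ent
      rw [Finset.mul_sum]
      refine Finset.sum_congr rfl fun z _ => ?_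
      rw [hmarg t z, Real.negMulLog]
      have e : c * marg r' t z / c = marg r' t z := mul_div_cancel_left₀ _ hcne
      rw [e]
      ring
    calc ∑ f, -(r f * Real.log (r f / c)) = c * ent r' := hLHS
      _ ≤ c * ∑ t, ent (marg r' t) :=
          mul_le_mul_of_nonneg_left (ent_le_sum_ent_marg r' hr'0 hr'1) hc0
      _ = ∑ t, ∑ z, -(marg r t z * Real.log (marg r t z / c)) := by
          rw [Finset.mul_sum]
          exact Finset.sum_congr rfl fun t _ => (hRHS t).symm

lemma marg_sum_comm {W : Type*} [Fintype W] (F : W → (Fin n → Z) → ℝ) (t : Fin n) (z : Z) :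
    marg (fun f => ∑ w, F w f) t z = ∑ w, marg (F w) t z := by
  unfold marg
  rw [Finset.sum_comm]
  refine Finset.sum_congr rfl fun f _ => ?_
  by_cases hft : f t = z <;> simp [hft]

end CondSub

section Bridge
variable {X Y : Type*} [Fintype X] [Fintype Y] {n : ℕ}

set_option maxHeartbeats 1000000 in
lemma sum_pair_eq {α : Type*} [AddCommMonoid α] (h : (Fin n → X) → (Fin n → Y) → α) :
    ∑ x : Fin n → X, ∑ y : Fin n → Y, h x y
      = ∑ f : Fin n → X × Y, h (fun t => (f t).1) (fun t => (f t).2) := by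
  calc ∑ x : Fin n → X, ∑ y : Fin n → Y, h x y
      = ∑ s : (Fin n → X) × (Fin n → Y), h s.1 s.2 :=
        (Fintype.sum_prod_type (fun s : (Fin n → X) × (Fin n → Y) => h s.1 s.2)).symm
    _ = ∑ f : Fin n → X × Y, h (fun t => (f t).1) (fun t => (f t).2) :=
      Fintype.sum_equiv (Equiv.arrowProdEquivProdArrow (Fin n) (fun _ => X) (fun _ => Y)).symm _ _ (fun s => rfl)

lemma sum_prod3 {M J T α : Type*} [Fintype M] [Fintype J] [Fintype T] [AddCommMonoid α]
    (h : M × J × T → α) : ∑ u, h u = ∑ t, ∑ m, ∑ j, h (m, j, t) := by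
  calc ∑ u : M × J × T, h u = ∑ m, ∑ jt : J × T, h (m, jt) := Fintype.sum_prod_type _
    _ = ∑ m, ∑ j, ∑ t, h (m, j, t) :=
        Finset.sum_congr rfl fun m _ => Fintype.sum_prod_type _
    _ = ∑ m, ∑ t, ∑ j, h (m, j, t) :=
        Finset.sum_congr rfl fun m _ => by rw [Finset.sum_comm]
    _ = ∑ t, ∑ m, ∑ j, h (m, j, t) := by rw [Finset.sum_comm]

end Bridge
set_option maxHeartbeats 1000000 in
lemma core {Z M J : Type*} [Fintype Z] [DecidableEq Z] [Fintype M] [Fintype J]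
    {n : ℕ} (hn : 0 < n)
    (F : M × J → (Fin n → Z) → ℝ) (hF0 : ∀ w f, 0 ≤ F w f)
    (hFtot : ∑ w, ∑ f, F w f = 1)
    (k : Z → ℝ) (hk0 : ∀ z, 0 ≤ k z) (hk1 : ∑ z, k z = 1)
    (ε : ℝ) (hε0 : 0 < ε) (hε14 : ε < 1/4)
    (hTV : ∑ f, |(∑ w, F w f) - ∏ t, k (f t)| ≤ 2*ε)
    (p : M × J × Fin n → Z → ℝ)
    (hpeq : ∀ u v, p u v = (n:ℝ)⁻¹ * marg (F (u.1, u.2.1)) u.2.2 v) :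
    MI p ≤ 8*ε*(Real.log (Fintype.card Z) + Real.log (1/ε))
      + Real.log (Fintype.card (M × J)) * (n:ℝ)⁻¹ := by
  have hn' : (0:ℝ) < (n:ℝ) := by exact_mod_cast hn
  have hnne : (n:ℝ) ≠ 0 := ne_of_gt hn'
  have hn1 : (1:ℝ) ≤ (n:ℝ) := by exact_mod_cast hn
  have hninv0 : (0:ℝ) < (n:ℝ)⁻¹ := by positivity
  have hninv1 : (n:ℝ)⁻¹ ≤ 1 := by
    rw [inv_le_one_iff₀]; right; exact hn1
  set Q : (Fin n → Z) → ℝ := fun f => ∑ w, F w f with hQdef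
  set kn : (Fin n → Z) → ℝ := fun f => ∏ t, k (f t) with hkndef
  have hQ0 : ∀ f, 0 ≤ Q f := fun f => Finset.sum_nonneg fun w _ => hF0 w f
  have hQ1 : ∑ f, Q f = 1 := by rw [← hFtot, Finset.sum_comm]
  have hkn0 : ∀ f, 0 ≤ kn f := fun f => Finset.prod_nonneg fun t _ => hk0 _
  have hkn1 : ∑ f, kn f = 1 := by
    rw [hkndef]
    rw [← Fintype.piFinset_univ, ← Finset.prod_univ_sum]
    simp [hk1]
  -- TV facts
  have hTVQ : ∑ f, |Q f - kn f| ≤ 2*ε := hTV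
  have hTVt : ∀ t : Fin n, ∑ z, |marg Q t z - k z| ≤ 2*ε := by
    intro t
    have e1 : marg kn t = k := marg_prod k hk1 t
    calc ∑ z, |marg Q t z - k z| = ∑ z, |marg Q t z - marg kn t z| := by rw [e1]
      _ ≤ ∑ f, |Q f - kn f| := marg_tv_le Q kn t
      _ ≤ 2*ε := hTVQ
  -- averaged single-letter marginal
  set pbar : Z → ℝ := fun z => (n:ℝ)⁻¹ * ∑ t, marg Q t z with hpbardef
  have hpbar0 : ∀ z, 0 ≤ pbar z := fun z => by
    have : 0 ≤ ∑ t, marg Q t z := Finset.sum_nonneg fun t _ => marg_nonneg Q hQ0 t z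
    positivity
  have hpbar1 : ∑ z, pbar z = 1 := by
    rw [hpbardef]
    rw [← Finset.mul_sum, Finset.sum_comm]
    have e1 : ∀ t ∈ Finset.univ, ∑ z, marg Q t z = (1:ℝ) := fun t _ => by
      rw [marg_sum, hQ1]
    rw [Finset.sum_congr rfl e1]
    simp [hnne]
  have hTVbar : ∑ z, |pbar z - k z| ≤ 2*ε := by
    have key : ∀ z, |pbar z - k z| ≤ (n:ℝ)⁻¹ * ∑ t, |marg Q t z - k z| := by
      intro z
      have e1 : pbar z - k z = (n:ℝ)⁻¹ * ∑ t, (marg Q t z - k z) := by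
        rw [Finset.sum_sub_distrib, Finset.sum_const, Finset.card_univ, Fintype.card_fin,
          nsmul_eq_mul, hpbardef]
        try field_simp
        try ring
      rw [e1, abs_mul, abs_of_pos hninv0]
      exact mul_le_mul_of_nonneg_left (Finset.abs_sum_le_sum_abs _ _) hninv0.le
    calc ∑ z, |pbar z - k z| ≤ ∑ z, (n:ℝ)⁻¹ * ∑ t, |marg Q t z - k z| :=
          Finset.sum_le_sum fun z _ => key z
      _ = (n:ℝ)⁻¹ * ∑ t, ∑ z, |marg Q t z - k z| := by
          rw [← Finset.mul_sum, Finset.sum_comm]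
      _ ≤ (n:ℝ)⁻¹ * ∑ t : Fin n, 2*ε := by
          refine mul_le_mul_of_nonneg_left (Finset.sum_le_sum fun t _ => hTVt t) hninv0.le
      _ = 2*ε := by
          rw [Finset.sum_const, Finset.card_univ, Fintype.card_fin, nsmul_eq_mul]
          field_simp
  -- identification of the V-marginal of p
  have hpV : ∀ v, (∑ u, p u v) = pbar v := by
    intro v
    rw [sum_prod3 (fun u => p u v)]
    have e1 : ∀ t : Fin n, ∑ m, ∑ j, p (m, j, t) v = (n:ℝ)⁻¹ * marg Q t v := by
      intro t
      have e2 : ∀ m j, p (m, j, t) v = (n:ℝ)⁻¹ * marg (F (m, j)) t v :=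
        fun m j => hpeq (m, j, t) v
      calc ∑ m, ∑ j, p (m, j, t) v
          = ∑ m, ∑ j, (n:ℝ)⁻¹ * marg (F (m, j)) t v :=
            Finset.sum_congr rfl fun m _ => Finset.sum_congr rfl fun j _ => e2 m j
        _ = (n:ℝ)⁻¹ * ∑ m, ∑ j, marg (F (m, j)) t v := by
            rw [Finset.mul_sum]
            exact Finset.sum_congr rfl fun m _ => by rw [Finset.mul_sum]
        _ = (n:ℝ)⁻¹ * marg Q t v := by
            congr 1
            rw [← Fintype.sum_prod_type (fun w : M × J => marg (F w) t v)]
            exact (marg_sum_comm F t v).symm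
    rw [Finset.sum_congr rfl fun t _ => e1 t, ← Finset.mul_sum]
  -- conditional entropy of p
  have hcond : condEnt p = (n:ℝ)⁻¹ * ∑ t : Fin n, ∑ w : M × J, ∑ v,
      -(marg (F w) t v * Real.log (marg (F w) t v / ∑ f, F w f)) := by
    unfold condEnt
    have hrow : ∀ u : M × J × Fin n, ∑ v', p u v' = (n:ℝ)⁻¹ * ∑ f, F (u.1, u.2.1) f := by
      intro u
      rw [Finset.sum_congr rfl fun v' _ => hpeq u v', ← Finset.mul_sum, marg_sum]
    have key : ∀ (u : M × J × Fin n) (v : Z),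
        -(p u v * Real.log (p u v / ∑ v', p u v'))
        = (n:ℝ)⁻¹ * -(marg (F (u.1, u.2.1)) u.2.2 v
            * Real.log (marg (F (u.1, u.2.1)) u.2.2 v / ∑ f, F (u.1, u.2.1) f)) := by
      intro u v
      rw [hpeq u v, hrow u,
        mul_div_mul_left (marg (F (u.1, u.2.1)) u.2.2 v) (∑ f, F (u.1, u.2.1) f)
          (inv_ne_zero hnne)]
      ring
    calc ∑ u, ∑ v, -(p u v * Real.log (p u v / ∑ v', p u v'))
        = ∑ u : M × J × Fin n, (n:ℝ)⁻¹ * ∑ v, -(marg (F (u.1, u.2.1)) u.2.2 v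
            * Real.log (marg (F (u.1, u.2.1)) u.2.2 v / ∑ f, F (u.1, u.2.1) f)) := by
          refine Finset.sum_congr rfl fun u _ => ?_
          rw [Finset.mul_sum]
          exact Finset.sum_congr rfl fun v _ => key u v
      _ = ∑ t : Fin n, ∑ m, ∑ j, (n:ℝ)⁻¹ * ∑ v, -(marg (F (m, j)) t v
            * Real.log (marg (F (m, j)) t v / ∑ f, F (m, j) f)) :=
          sum_prod3 _
      _ = (n:ℝ)⁻¹ * ∑ t : Fin n, ∑ w : M × J, ∑ v,
            -(marg (F w) t v * Real.log (marg (F w) t v / ∑ f, F w f)) := by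
          rw [Finset.mul_sum]
          refine Finset.sum_congr rfl fun t _ => ?_
          rw [Fintype.sum_prod_type (fun w : M × J => ∑ v, -(marg (F w) t v
            * Real.log (marg (F w) t v / ∑ f, F w f))), Finset.mul_sum]
          refine Finset.sum_congr rfl fun m _ => ?_
          rw [Finset.mul_sum]
  -- MI identity
  have hp0 : ∀ u v, 0 ≤ p u v := by
    intro u v
    rw [hpeq u v]
    exact mul_nonneg hninv0.le (marg_nonneg _ (hF0 _) _ _)
  have hMI : MI p = ent pbar - condEnt p := by
    rw [MI_eq p hp0]
    have e : (fun v => ∑ u, p u v) = pbar := funext hpV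
    rw [e]
  -- subadditivity: T ≥ condEnt F
  have hsubT : condEnt F ≤ ∑ t : Fin n, ∑ w : M × J, ∑ v,
      -(marg (F w) t v * Real.log (marg (F w) t v / ∑ f, F w f)) := by
    rw [Finset.sum_comm]
    unfold condEnt
    exact Finset.sum_le_sum fun w _ => condrow_subadd (F w) (hF0 w)
  -- chain rule and monotonicity
  have hchain : ∑ w, ∑ f, Real.negMulLog (F w f)
      = ent (fun w => ∑ f, F w f) + condEnt F := chain_rule F hF0
  have hQle : ent Q ≤ ∑ w, ∑ f, Real.negMulLog (F w f) := ent_marginal_le F hF0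
  have hPwle : ent (fun w => ∑ f, F w f) ≤ Real.log (Fintype.card (M × J)) :=
    ent_le_log_card _ (fun w => Finset.sum_nonneg fun f _ => hF0 w f) hFtot
  -- Fannes bounds
  set LZ := Real.log (Fintype.card Z) with hLZ
  set Le := Real.log (1/ε) with hLe
  have hLZ0 : 0 ≤ LZ := by
    rw [hLZ]
    apply Real.log_nonneg
    have : Nonempty Z := by
      by_contra h
      rw [not_nonempty_iff] at h
      simp [Finset.univ_eq_empty] at hk1
    exact_mod_cast Fintype.card_pos
  have hLe1 : 1 ≤ Le := by
    rw [hLe]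
    rw [Real.le_log_iff_exp_le (by positivity)]
    calc Real.exp 1 ≤ 2.7182818286 := le_of_lt Real.exp_one_lt_d9
      _ ≤ 4 := by norm_num
      _ ≤ 1/ε := by rw [le_div_iff₀ hε0]; linarith
  have hfA : ent pbar ≤ ent k + 2*ε*LZ + 2*ε*Le + 2*ε :=
    fannes pbar k hpbar0 hpbar1 hk0 hk1 ε hε0 hε14 hTVbar
  have hcardfun : Real.log (Fintype.card (Fin n → Z)) = (n:ℝ) * LZ := by
    rw [Fintype.card_fun, Fintype.card_fin, Nat.cast_pow, Real.log_pow, hLZ]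
  have hfB : (n:ℝ) * ent k ≤ ent Q + 2*ε*((n:ℝ)*LZ) + 2*ε*Le + 2*ε := by
    have h1 : ∑ f, |kn f - Q f| ≤ 2*ε := by
      rw [Finset.sum_congr rfl fun f _ => abs_sub_comm (kn f) (Q f)]
      exact hTVQ
    have h2 := fannes kn Q hkn0 hkn1 hQ0 hQ1 ε hε0 hε14 h1
    rw [hcardfun] at h2
    have h3 : ent kn = (n:ℝ) * ent k := by
      rw [hkndef]
      exact ent_prod k hk0 hk1
    rw [h3] at h2
    rw [hLe]
    linarith
  -- put it together
  set T := ∑ t : Fin n, ∑ w : M × J, ∑ v,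
      -(marg (F w) t v * Real.log (marg (F w) t v / ∑ f, F w f)) with hT
  set LM := Real.log (Fintype.card (M × J)) with hLM
  have hTge : ent Q - LM ≤ T := by
    have : condEnt F ≤ T := hsubT
    linarith
  have h_a : (n:ℝ)⁻¹ * (ent Q - LM) ≤ (n:ℝ)⁻¹ * T :=
    mul_le_mul_of_nonneg_left hTge hninv0.le
  have h_b : (n:ℝ)⁻¹ * ((n:ℝ) * ent k - (2*ε*((n:ℝ)*LZ) + 2*ε*Le + 2*ε)) ≤ (n:ℝ)⁻¹ * ent Q := by
    refine mul_le_mul_of_nonneg_left ?_ hninv0.le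
    linarith
  have h_exp1 : (n:ℝ)⁻¹ * ((n:ℝ) * ent k - (2*ε*((n:ℝ)*LZ) + 2*ε*Le + 2*ε))
      = ent k - (2*ε*LZ + (n:ℝ)⁻¹ * (2*ε*Le + 2*ε)) := by
    field_simp
    ring
  have h_exp2 : (n:ℝ)⁻¹ * (ent Q - LM) = (n:ℝ)⁻¹ * ent Q - (n:ℝ)⁻¹ * LM := by ring
  have h_c : (n:ℝ)⁻¹ * (2*ε*Le + 2*ε) ≤ 2*ε*Le + 2*ε := by
    have h0 : 0 ≤ 2*ε*Le + 2*ε := by nlinarith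
    nlinarith
  have hMIle : MI p ≤ ent pbar - (n:ℝ)⁻¹ * T := by
    rw [hMI, hcond]
  have hfinal1 : MI p ≤ 4*ε*LZ + 4*ε*Le + 4*ε + (n:ℝ)⁻¹ * LM := by
    have := hMIle
    nlinarith [h_a, h_b, h_exp1, h_exp2, h_c, hfA]
  have hlast : 4*ε*LZ + 4*ε*Le + 4*ε ≤ 8*ε*(LZ + Le) := by nlinarith
  calc MI p ≤ 4*ε*LZ + 4*ε*Le + 4*ε + (n:ℝ)⁻¹ * LM := hfinal1
    _ ≤ 8*ε*(LZ + Le) + (n:ℝ)⁻¹ * LM := by linarith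
    _ = 8*ε*(LZ + Le) + LM * (n:ℝ)⁻¹ := by ring

set_option maxHeartbeats 2000000 in
/-- Converse rate bound for the sum rate: if the joint law
`P` of `(X^n,Y^n,J,M)` satisfies `‖P_{X^n,Y^n} − q_{X,Y}^{⊗n}‖_TV ≤ ε` with
`ε ∈ (0,1/4)`, and `T` is uniform on `{1,…,n}` independent of everything, then
`(1/n)·(log|ℳ| + log|𝒥|) ≥ I(M,J,T ; X_T,Y_T) − 2g(ε)`. -/
theorem converse_sum_rate_bound
    (n : ℕ) (hn : 0 < n)
    {X Y J M : Type*} [Fintype X] [Fintype Y] [Fintype J] [Fintype M]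
    [DecidableEq X] [DecidableEq Y]
    (qXY : X → Y → ℝ) (hqXY : IsPMF (fun s : X × Y => qXY s.1 s.2))
    (ε : ℝ) (hε : ε ∈ Set.Ioo (0 : ℝ) (1 / 4))
    (P : (Fin n → X) → (Fin n → Y) → J → M → ℝ)
    (hP : IsPMF (fun s : (Fin n → X) × (Fin n → Y) × J × M =>
        P s.1 s.2.1 s.2.2.1 s.2.2.2))
    (hTV : TV (fun xy : (Fin n → X) × (Fin n → Y) => ∑ j, ∑ m, P xy.1 xy.2 j m)
        (fun xy => ∏ t, qXY (xy.1 t) (xy.2 t)) ≤ ε) :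
    MI (fun (mjt : M × J × Fin n) (xy : X × Y) =>
          ((n : ℝ))⁻¹ * ∑ x : Fin n → X, ∑ y : Fin n → Y,
            (if x mjt.2.2 = xy.1 ∧ y mjt.2.2 = xy.2
              then P x y mjt.2.1 mjt.1 else 0))
        - 2 * g X Y ε
      ≤ (Real.log (Fintype.card M) + Real.log (Fintype.card J)) / n := by
  classical
  obtain ⟨hε0, hε14⟩ := hε
  obtain ⟨hP0, hP1⟩ := hP
  obtain ⟨hq0, hq1⟩ := hqXY
  set p : M × J × Fin n → X × Y → ℝ := fun (mjt : M × J × Fin n) (xy : X × Y) =>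
      ((n : ℝ))⁻¹ * ∑ x : Fin n → X, ∑ y : Fin n → Y,
        (if x mjt.2.2 = xy.1 ∧ y mjt.2.2 = xy.2
          then P x y mjt.2.1 mjt.1 else 0) with hpdef
  set F : M × J → (Fin n → X × Y) → ℝ :=
    fun w f => P (fun t => (f t).1) (fun t => (f t).2) w.2 w.1 with hF
  set k : X × Y → ℝ := fun z => qXY z.1 z.2 with hkdef
  have hF0 : ∀ w f, 0 ≤ F w f := fun w f =>
    hP0 ⟨fun t => (f t).1, fun t => (f t).2, w.2, w.1⟩
  have hk0 : ∀ z, 0 ≤ k z := fun z => hq0 z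
  have hk1 : ∑ z, k z = 1 := hq1
  -- total mass of F
  have h1 : ∑ x : Fin n → X, ∑ y : Fin n → Y, ∑ j : J, ∑ m : M, P x y j m = 1 := by
    have h := hP1
    simp only [Fintype.sum_prod_type] at h
    exact h
  rw [sum_pair_eq (fun x y => ∑ j : J, ∑ m : M, P x y j m)] at h1
  have hFtot : ∑ w : M × J, ∑ f, F w f = 1 := by
    rw [Finset.sum_comm, ← h1]
    refine Finset.sum_congr rfl fun f _ => ?_
    rw [Fintype.sum_prod_type (fun w : M × J => F w f), Finset.sum_comm]
  -- total variation hypothesis, reindexed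
  have hTV2 : ∑ f : Fin n → X × Y, |(∑ w : M × J, F w f) - ∏ t, k (f t)| ≤ 2*ε := by
    have e : ∑ f : Fin n → X × Y, |(∑ w : M × J, F w f) - ∏ t, k (f t)|
        = ∑ x : Fin n → X, ∑ y : Fin n → Y,
            |(∑ j, ∑ m, P x y j m) - ∏ t, qXY (x t) (y t)| := by
      rw [sum_pair_eq (fun x y => |(∑ j, ∑ m, P x y j m) - ∏ t, qXY (x t) (y t)|)]
      refine Finset.sum_congr rfl fun f _ => ?_
      have ea : (∑ w : M × J, F w f)
          = ∑ j, ∑ m, P (fun t => (f t).1) (fun t => (f t).2) j m := by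
        rw [Fintype.sum_prod_type (fun w : M × J => F w f), Finset.sum_comm]
      rw [ea, hkdef]
    rw [e]
    unfold TV at hTV
    simp only [] at hTV
    have e2 := Fintype.sum_prod_type (fun s : (Fin n → X) × (Fin n → Y) =>
      |(∑ j, ∑ m, P s.1 s.2 j m) - ∏ t, qXY (s.1 t) (s.2 t)|)
    rw [← e2]
    linarith
  -- identification of the MI argument
  have hpeq : ∀ (u : M × J × Fin n) (v : X × Y),
      p u v = (n:ℝ)⁻¹ * marg (F (u.1, u.2.1)) u.2.2 v := by
    intro u v
    rw [hpdef]
    show (n:ℝ)⁻¹ * (∑ x : Fin n → X, ∑ y : Fin n → Y,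
        (if x u.2.2 = v.1 ∧ y u.2.2 = v.2 then P x y u.2.1 u.1 else 0))
      = (n:ℝ)⁻¹ * marg (F (u.1, u.2.1)) u.2.2 v
    congr 1
    rw [sum_pair_eq (fun x y => if x u.2.2 = v.1 ∧ y u.2.2 = v.2
      then P x y u.2.1 u.1 else 0)]
    unfold marg
    refine Finset.sum_congr rfl fun f _ => ?_
    by_cases hc : f u.2.2 = v
    · have hc2 : (fun t => (f t).1) u.2.2 = v.1 ∧ (fun t => (f t).2) u.2.2 = v.2 :=
        ⟨by simp [hc], by simp [hc]⟩
      rw [if_pos hc2, if_pos hc, hF]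
    · have hc2 : ¬((fun t => (f t).1) u.2.2 = v.1 ∧ (fun t => (f t).2) u.2.2 = v.2) := by
        intro hcc
        exact hc (Prod.ext_iff.mpr ⟨hcc.1, hcc.2⟩)
      rw [if_neg hc2, if_neg hc]
  have hcore := core hn F hF0 hFtot k hk0 hk1 ε hε0 hε14 hTV2 p hpeq
  -- cards
  have hneXY : Nonempty (X × Y) := by
    by_contra h
    rw [not_nonempty_iff] at h
    simp [Finset.univ_eq_empty] at hq1
  have hneX : Nonempty X := Nonempty.map Prod.fst hneXY
  have hneY : Nonempty Y := Nonempty.map Prod.snd hneXY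
  have hneAll : Nonempty ((Fin n → X) × (Fin n → Y) × J × M) := by
    by_contra h
    rw [not_nonempty_iff] at h
    simp [Finset.univ_eq_empty] at hP1
  have hneM : Nonempty M := Nonempty.map (fun s => s.2.2.2) hneAll
  have hneJ : Nonempty J := Nonempty.map (fun s => s.2.2.1) hneAll
  have hcZ : Real.log (Fintype.card (X × Y))
      = Real.log (Fintype.card X) + Real.log (Fintype.card Y) := by
    rw [Fintype.card_prod, Nat.cast_mul, Real.log_mul
      (by exact_mod_cast Fintype.card_ne_zero) (by exact_mod_cast Fintype.card_ne_zero)]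
  have hcMJ : Real.log (Fintype.card (M × J))
      = Real.log (Fintype.card M) + Real.log (Fintype.card J) := by
    rw [Fintype.card_prod, Nat.cast_mul, Real.log_mul
      (by exact_mod_cast Fintype.card_ne_zero) (by exact_mod_cast Fintype.card_ne_zero)]
  rw [hcZ, hcMJ] at hcore
  have hgdef : g X Y ε = 4*ε*(Real.log (Fintype.card X) + Real.log (Fintype.card Y)
      + Real.log (1/ε)) := rfl
  rw [div_eq_mul_inv, hgdef]
  nlinarith [hcore]

end RCS
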